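/- Let Σ be an alphabet, Σ_1,…,Σ_n ⊆ Σ subalphabets with projections P_i, and K ⊆ L ⊆ Σ* languages. The ALTOCT condition holds if and only if the OCT condition holds. -/
import Mathlib


/-- The three possible observer outputs: Yes, No, Unknown. -/
inductive Obs : Type
  | Y
  | N
  | U
deriving DecidableEq

/-- Projection onto subalphabet `Sub i`: keep only the letters lying in `Sub i`. -/
def P {α : Type*} {n : ℕ} (Sub : Fin n → Set α) [∀ i, DecidablePred (· ∈ Sub i)]
    (i : Fin n) (ρ : List α) : List α :=
  ρ.filter (fun x => decide (x ∈ Sub i))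

/-- Agent `i` can tell whether `ρ` is good or bad. -/
def cantell {α : Type*} {n : ℕ} (Sub : Fin n → Set α) [∀ i, DecidablePred (· ∈ Sub i)]
    (K L : Set (List α)) (i : Fin n) (ρ : List α) : Prop :=
  (ρ ∈ K → ¬ ∃ ρ' ∈ L \ K, P Sub i ρ = P Sub i ρ') ∧
  (ρ ∈ L \ K → ¬ ∃ ρ' ∈ K, P Sub i ρ = P Sub i ρ')

/-- The "at least one can tell" (OCT) condition. -/
def OCT {α : Type*} {n : ℕ} (Sub : Fin n → Set α) [∀ i, DecidablePred (· ∈ Sub i)]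
    (K L : Set (List α)) : Prop :=
  ∀ ρ ∈ L, ∃ i : Fin n, cantell Sub K L i ρ

/-- The given family of local decision functions satisfies the ALTOCT requirements. -/
def ALTOCTwith {α : Type*} {n : ℕ} (Sub : Fin n → Set α) [∀ i, DecidablePred (· ∈ Sub i)]
    (K L : Set (List α)) (f : Fin n → List α → Obs) : Prop :=
  (∀ ρ ∈ L, ∃ i : Fin n,
      (ρ ∈ K → f i (P Sub i ρ) = Obs.Y) ∧ (ρ ∈ L \ K → f i (P Sub i ρ) = Obs.N)) ∧
  (∀ ρ ∈ L, ∀ i : Fin n,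
      (f i (P Sub i ρ) = Obs.Y → ρ ∈ K) ∧ (f i (P Sub i ρ) = Obs.N → ρ ∈ L \ K))

/-- The alternative OCT (ALTOCT) condition: suitable local decision functions exist. -/
def ALTOCT {α : Type*} {n : ℕ} (Sub : Fin n → Set α) [∀ i, DecidablePred (· ∈ Sub i)]
    (K L : Set (List α)) : Prop :=
  ∃ f : Fin n → List α → Obs, ALTOCTwith Sub K L f

/-- ALTOCT holds if and only if OCT holds. -/
theorem ALTOCT_iff_OCT {α : Type*} {n : ℕ} (hn : 0 < n)
    (Sub : Fin n → Set α) [∀ i, DecidablePred (· ∈ Sub i)]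
    (K L : Set (List α)) (hKL : K ⊆ L) :
    ALTOCT Sub K L ↔ OCT Sub K L := by
  constructor
  · rintro ⟨f, hcomp, hsound⟩ ρ hρ
    obtain ⟨i, hY, hN⟩ := hcomp ρ hρ
    refine ⟨i, ?_, ?_⟩
    · rintro hK ⟨ρ', hρ', heq⟩
      have := (hsound ρ' hρ'.1 i).1 (by rw [← heq]; exact hY hK)
      exact hρ'.2 this
    · rintro hLK ⟨ρ', hρ', heq⟩
      have := ((hsound ρ' (hKL hρ') i).2 (by rw [← heq]; exact hN hLK)).2
      exact this hρ'
  · intro hoct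
    classical
    refine ⟨fun i w =>
      if ∃ ρ ∈ K, cantell Sub K L i ρ ∧ P Sub i ρ = w then Obs.Y
      else if ∃ ρ ∈ L \ K, cantell Sub K L i ρ ∧ P Sub i ρ = w then Obs.N
      else Obs.U, ?_, ?_⟩
    · intro ρ hρ
      obtain ⟨i, hct⟩ := hoct ρ hρ
      refine ⟨i, ?_, ?_⟩
      · intro hK
        beta_reduce
        rw [if_pos ⟨ρ, hK, hct, rfl⟩]
      · intro hLK
        beta_reduce
        rw [if_neg, if_pos ⟨ρ, hLK, hct, rfl⟩]
        rintro ⟨σ, hσK, hσct, hσeq⟩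
        exact hσct.1 hσK ⟨ρ, hLK, hσeq⟩
    · intro ρ hρ i
      constructor
      · intro h
        by_contra hK
        beta_reduce at h
        split_ifs at h with h1 h2
        obtain ⟨σ, hσK, hσct, hσeq⟩ := h1
        exact hσct.1 hσK ⟨ρ, ⟨hρ, hK⟩, hσeq⟩
      · intro h
        constructor
        · exact hρ
        · intro hK
          beta_reduce at h
          split_ifs at h with h1 h2
          obtain ⟨σ, hσLK, hσct, hσeq⟩ := h2
          exact hσct.2 hσLK ⟨ρ, hK, hσeq⟩
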